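/- Let D and D' be unconditionally equivalent DAGs on the same finite vertex set V. Then {de_D(m) : m a source node of D} = {de_{D'}(m) : m a source node of D'}, i.e., E^D = E^{D'}. -/

import Mathlib

namespace UEC

variable {V : Type*}

/-- A directed graph is a DAG if it has no directed cycles. -/
def IsDAG (D : Digraph V) : Prop := ∀ v : V, ¬ Relation.TransGen D.Adj v v

/-- `an D v` : the set of ancestors of `v` (nodes with a directed path to `v`),
including `v` itself. -/
def an (D : Digraph V) (v : V) : Set V := {u | Relation.ReflTransGen D.Adj u v}

/-- `de D v` : the set of descendants of `v` (nodes reachable by a directed path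
from `v`), including `v` itself. -/
def de (D : Digraph V) (v : V) : Set V := {u | Relation.ReflTransGen D.Adj v u}

/-- `pa D v` : the set of parents of `v`. -/
def pa (D : Digraph V) (v : V) : Set V := {u | D.Adj u v}

/-- A source node is a node with no parents. -/
def IsSource (D : Digraph V) (v : V) : Prop := pa D v = ∅

/-- `sources D` : the set of source nodes of `D` (denoted `ma_D(V)` in the paper). -/
def sources (D : Digraph V) : Set V := {v | IsSource D v}

/-- Ancestors of a set of nodes. -/
def anSet (D : Digraph V) (A : Set V) : Set V := ⋃ a ∈ A, an D a

/-- `maSet D A = {u ∈ an_D(A) : an_D(u) = {u}}`, the source nodes that are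
ancestors of `A`. -/
def maSet (D : Digraph V) (A : Set V) : Set V :=
  {u | u ∈ anSet D A ∧ an D u = {u}}

/-- Two nodes are adjacent in a digraph if there is an edge between them in
either direction. -/
def Adjacent (D : Digraph V) (v w : V) : Prop := D.Adj v w ∨ D.Adj w v

/-- A trek in `D` is a path over distinct vertices (given as the list of its
vertices, consecutive ones being adjacent) containing no collider
`p i → p (i+1) ← p (i+2)` as a subpath. -/
def IsTrekList (D : Digraph V) (p : List V) : Prop :=
  p.Nodup ∧
    (∀ i : ℕ, (h : i + 1 < p.length) →
      (D.Adj (p.get ⟨i, by omega⟩) (p.get ⟨i + 1, h⟩) ∨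
        D.Adj (p.get ⟨i + 1, h⟩) (p.get ⟨i, by omega⟩))) ∧
    (∀ i : ℕ, (h : i + 2 < p.length) →
      ¬(D.Adj (p.get ⟨i, by omega⟩) (p.get ⟨i + 1, by omega⟩) ∧
        D.Adj (p.get ⟨i + 2, h⟩) (p.get ⟨i + 1, by omega⟩)))

/-- There is a trek between `v` and `w` in `D`. -/
def HasTrek (D : Digraph V) (v w : V) : Prop :=
  ∃ p : List V, IsTrekList D p ∧ p.head? = some v ∧ p.getLast? = some w

/-- Adjacency in the unconditional dependence graph `U^D` : two distinct nodes
are adjacent iff there is a trek between them. -/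
def UAdj (D : Digraph V) (v w : V) : Prop :=
  v ≠ w ∧ (HasTrek D v w ∨ HasTrek D w v)

/-- Two digraphs on the same vertex set are unconditionally equivalent if for
all distinct nodes there is a trek between them in one iff there is one in the
other. -/
def UncondEquiv (D D' : Digraph V) : Prop :=
  ∀ v w : V, v ≠ w → (HasTrek D v w ↔ HasTrek D' v w)

/-- The digraph obtained by adding the edge `v → w`. -/
def addEdge (D : Digraph V) (v w : V) : Digraph V :=
  ⟨fun a b => D.Adj a b ∨ (a = v ∧ b = w)⟩

/-- The digraph obtained by deleting the edge `v → w`. -/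
def delEdge (D : Digraph V) (v w : V) : Digraph V :=
  ⟨fun a b => D.Adj a b ∧ ¬(a = v ∧ b = w)⟩

/-- The digraph obtained by replacing the edge `v → w` with `w → v`. -/
def revEdge (D : Digraph V) (v w : V) : Digraph V :=
  ⟨fun a b => (D.Adj a b ∧ ¬(a = v ∧ b = w)) ∨ (a = w ∧ b = v)⟩

/-- The ordered pair `(v, w)` is partially weakly covered in `D`. -/
def PartiallyWeaklyCovered (D : Digraph V) (v w : V) : Prop :=
  maSet D {v} ⊆ maSet D {w} ∧ v ∉ an D w ∧ w ∉ an D v ∧ pa D v ≠ ∅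

/-- The ordered pair `(v, w)` is implied by transitivity in `D`, i.e.
`v ∈ an_D(w) \ ({w} ∪ pa_D(w))`. -/
def ImpliedByTransitivity (D : Digraph V) (v w : V) : Prop :=
  v ∈ an D w \ ({w} ∪ pa D w)

/-- The edge `v → w` is weakly covered in `D`. -/
def WeaklyCovered (D : Digraph V) (v w : V) : Prop :=
  maSet D (pa D v) = maSet D (pa D w \ {v}) ∧ v ∉ anSet D (pa D w \ {v})

/-!
In a DAG two nodes are joined by a trek iff they have a common ancestor: a trek climbs backwards
along directed edges to its top node and then descends, and two directed paths from a common
ancestor that share no other vertex splice into such a trek. Hence the descendants of a source `m`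
are exactly the nodes trek-connected to `m`. For a source `m` of `D` pick a source `m'` of `D'`
above `m`; then `m'` is also a descendant of `m` in `D`, and both `de D m` and `de D' m'` consist
of the nodes trek-connected to `m'`, in `D` and in `D'` respectively, which unconditional
equivalence identifies.
-/

section

variable {D D' : Digraph V}

theorem IsDAG.not_adj_of_adj (hD : IsDAG D) {x y : V} (hxy : D.Adj x y) : ¬D.Adj y x :=
  fun hyx => hD x (.head hxy (.single hyx))

theorem IsDAG.nodup_of_isChain (hD : IsDAG D) {l : List V} (hl : l.IsChain D.Adj) : l.Nodup :=
  have : Std.Irrefl (Relation.TransGen D.Adj) := ⟨hD⟩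
  (List.isChain_iff_pairwise.mp (hl.imp fun _ _ => Relation.TransGen.single)).nodup

theorem isTrekList_singleton (x : V) : IsTrekList D [x] :=
  ⟨List.nodup_singleton x, fun _ h => by simp at h, fun _ h => by simp at h⟩

theorem isTrekList_cons_cons {x y : V} {l : List V} :
    IsTrekList D (x :: y :: l) ↔
      x ∉ y :: l ∧ Adjacent D x y ∧ (∀ z ∈ l.head?, ¬(D.Adj x y ∧ D.Adj z y)) ∧
        IsTrekList D (y :: l) := by
  simp only [IsTrekList, List.nodup_cons (a := x), Adjacent]
  constructor
  · rintro ⟨⟨hx, hnd⟩, hadj, hcol⟩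
    refine ⟨hx, by simpa using hadj 0 (by simp), ?_, hnd, fun i h => ?_, fun i h => ?_⟩
    · intro z hz
      obtain ⟨l', rfl⟩ := List.head?_eq_some_iff.mp hz
      simpa using hcol 0 (by simp)
    · simpa using hadj (i + 1) (by simp at h ⊢; omega)
    · simpa using hcol (i + 1) (by simp at h ⊢; omega)
  · rintro ⟨hx, hxy, hcol, hnd, hadj, hcol'⟩
    refine ⟨⟨hx, hnd⟩, fun i h => ?_, fun i h => ?_⟩
    · rcases i with _ | i
      · simpa using hxy
      · simpa using hadj i (by simp at h ⊢; omega)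
    · rcases i with _ | i
      · obtain ⟨z, l', rfl⟩ : ∃ z l', l = z :: l' :=
          List.exists_cons_of_length_pos (by simp at h; omega)
        simpa using hcol z rfl
      · simpa using hcol' i (by simp at h ⊢; omega)

theorem IsDAG.isTrekList_of_isChain (hD : IsDAG D) {l : List V} (hl : l.IsChain D.Adj) :
    IsTrekList D l := by
  induction l with
  | nil => exact ⟨List.nodup_nil, fun _ h => by simp at h, fun _ h => by simp at h⟩
  | cons x l ih =>
    rcases l with _ | ⟨y, l⟩
    · exact isTrekList_singleton x
    · obtain ⟨hxy, hl'⟩ := List.isChain_cons_cons.mp hl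
      refine isTrekList_cons_cons.mpr ⟨(List.nodup_cons.mp (hD.nodup_of_isChain hl)).1,
        .inl hxy, fun z hz hcol => ?_, ih hl'⟩
      obtain ⟨l', rfl⟩ := List.head?_eq_some_iff.mp hz
      exact hD.not_adj_of_adj (List.isChain_cons_cons.mp hl').1 hcol.2

theorem IsDAG.isTrekList_cons_of_adj (hD : IsDAG D) {x y : V} {l : List V}
    (hl : IsTrekList D (y :: l)) (hyx : D.Adj y x) (hx : x ∉ y :: l) :
    IsTrekList D (x :: y :: l) :=
  isTrekList_cons_cons.mpr ⟨hx, .inr hyx, fun _ _ hcol => hD.not_adj_of_adj hyx hcol.1, hl⟩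

theorem IsDAG.isTrekList_reverse_append (hD : IsDAG D) {u : V} {S L : List V}
    (hL : IsTrekList D (u :: L)) (hS : (u :: S).IsChain D.Adj) (hSL : S.Disjoint (u :: L)) :
    IsTrekList D (S.reverse ++ u :: L) := by
  induction S generalizing u L with
  | nil => exact hL
  | cons s S ih =>
    obtain ⟨hus, hS'⟩ := List.isChain_cons_cons.mp hS
    obtain ⟨hs, hSL⟩ := List.disjoint_cons_left.mp hSL
    have hsS : s ∉ S := (List.nodup_cons.mp (hD.nodup_of_isChain hS')).1
    simpa using ih (hD.isTrekList_cons_of_adj hL hus hs) hS'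
      (List.disjoint_cons_right.mpr ⟨hsS, hSL⟩)

theorem IsTrekList.isChain_of_adj {x : V} {l : List V} (hl : IsTrekList D (x :: l))
    (hx : ∀ y ∈ l.head?, D.Adj x y) : (x :: l).IsChain D.Adj := by
  induction l generalizing x with
  | nil => exact .singleton x
  | cons y l ih =>
    obtain ⟨-, -, hcol, hl'⟩ := isTrekList_cons_cons.mp hl
    have hxy : D.Adj x y := hx y rfl
    refine (ih hl' fun z hz => ?_).cons (by simpa using hxy)
    obtain ⟨l', rfl⟩ := List.head?_eq_some_iff.mp hz
    obtain ⟨-, hyz | hzy, -⟩ := isTrekList_cons_cons.mp hl'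
    · exact hyz
    · exact absurd ⟨hxy, hzy⟩ (hcol z hz)

theorem IsTrekList.exists_mem_an {x : V} {l : List V} (hl : IsTrekList D (x :: l)) :
    ∃ u ∈ an D x, u ∈ an D ((x :: l).getLast (List.cons_ne_nil x l)) := by
  induction l generalizing x with
  | nil => exact ⟨x, .refl, .refl⟩
  | cons y l ih =>
    obtain ⟨-, hxy | hyx, -, hl'⟩ := isTrekList_cons_cons.mp hl
    · exact ⟨x, .refl, List.relationReflTransGen_of_exists_isChain_cons _
        (hl.isChain_of_adj (by simpa using hxy)) rfl⟩
    · obtain ⟨u, huy, hu⟩ := ih hl'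
      exact ⟨u, huy.tail hyx, by simpa using hu⟩

theorem IsDAG.hasTrek_getLast_getLast (hD : IsDAG D) {u : V} {S T : List V}
    (hS : (u :: S).IsChain D.Adj) (hT : (u :: T).IsChain D.Adj) :
    HasTrek D ((u :: S).getLast (List.cons_ne_nil u S))
      ((u :: T).getLast (List.cons_ne_nil u T)) := by
  induction h : S.length + T.length using Nat.strong_induction_on generalizing u S T with
  | _ n ih =>
  by_cases hST : ∃ t ∈ S, t ∈ T
  · -- a vertex `t` shared by both paths is a common ancestor closer to the endpoints
    obtain ⟨t, htS, htT⟩ := hST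
    obtain ⟨S₁, S₂, rfl⟩ := List.append_of_mem htS
    obtain ⟨T₁, T₂, rfl⟩ := List.append_of_mem htT
    simpa using ih _ (by simp at h; omega) (List.IsChain.right_of_append (l₁ := u :: S₁) hS)
      (List.IsChain.right_of_append (l₁ := u :: T₁) hT) rfl
  · have hST : S.Disjoint T := List.disjoint_left.mpr fun t htS htT => hST ⟨t, htS, htT⟩
    have huS : u ∉ S := (List.nodup_cons.mp (hD.nodup_of_isChain hS)).1
    refine ⟨S.reverse ++ u :: T, hD.isTrekList_reverse_append (hD.isTrekList_of_isChain hT) hS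
      (List.disjoint_cons_right.mpr ⟨huS, hST⟩), ?_, ?_⟩
    · simp [List.getLast?_eq_some_getLast (List.cons_ne_nil u S) |>.symm, List.getLast?_cons]
    · rw [List.getLast?_append_of_ne_nil _ (List.cons_ne_nil u T)]
      exact List.getLast?_eq_some_getLast _

theorem IsDAG.hasTrek_of_mem_an (hD : IsDAG D) {u v w : V} (hv : u ∈ an D v)
    (hw : u ∈ an D w) : HasTrek D v w := by
  obtain ⟨S, hS, rfl⟩ := List.exists_isChain_cons_of_relationReflTransGen hv
  obtain ⟨T, hT, rfl⟩ := List.exists_isChain_cons_of_relationReflTransGen hw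
  exact hD.hasTrek_getLast_getLast hS hT

theorem HasTrek.exists_mem_an {v w : V} (h : HasTrek D v w) : ∃ u ∈ an D v, u ∈ an D w := by
  obtain ⟨p, hp, hv, hw⟩ := h
  obtain ⟨l, rfl⟩ := List.head?_eq_some_iff.mp hv
  rw [List.getLast?_eq_some_getLast (List.cons_ne_nil v l), Option.some_inj] at hw
  exact hw ▸ hp.exists_mem_an

theorem hasTrek_self (v : V) : HasTrek D v v :=
  ⟨[v], isTrekList_singleton v, rfl, rfl⟩

theorem UncondEquiv.symm (h : UncondEquiv D D') : UncondEquiv D' D :=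
  fun v w hvw => (h v w hvw).symm

theorem UncondEquiv.hasTrek_iff (h : UncondEquiv D D') (v w : V) :
    HasTrek D v w ↔ HasTrek D' v w := by
  rcases eq_or_ne v w with rfl | hvw
  · exact iff_of_true (hasTrek_self v) (hasTrek_self v)
  · exact h v w hvw

theorem eq_of_mem_an_of_mem_sources {m u : V} (hm : m ∈ sources D) (hu : u ∈ an D m) :
    u = m := by
  rcases hu.cases_tail with rfl | ⟨b, -, hbm⟩
  · rfl
  · have hpa : pa D m = ∅ := hm
    exact absurd (show b ∈ pa D m from hbm) (hpa ▸ Set.notMem_empty b)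

theorem mem_de_of_hasTrek {m x : V} (hm : m ∈ sources D) (h : HasTrek D m x) : x ∈ de D m := by
  obtain ⟨u, hum, hux⟩ := h.exists_mem_an
  exact eq_of_mem_an_of_mem_sources hm hum ▸ hux

theorem IsDAG.exists_mem_sources_mem_an [Finite V] (hD : IsDAG D) (v : V) :
    ∃ m ∈ sources D, m ∈ an D v := by
  have : Std.Irrefl (Relation.TransGen D.Adj) := ⟨hD⟩
  obtain ⟨m, hm, hmin⟩ := (Finite.wellFounded_of_trans_of_irrefl
    (Relation.TransGen D.Adj)).has_min (an D v) ⟨v, .refl⟩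
  refine ⟨m, Set.eq_empty_iff_forall_notMem.mpr fun x hx => ?_, hm⟩
  exact hmin x (.head hx hm) (.single hx)

theorem de_subset_de_of_mem_de (hD : IsDAG D) (h : UncondEquiv D D') {m m' : V}
    (hm' : m' ∈ sources D') (hmm' : m' ∈ de D m) : de D m ⊆ de D' m' :=
  fun x hx => mem_de_of_hasTrek hm' ((h.hasTrek_iff m' x).mp (hD.hasTrek_of_mem_an hmm' hx))

theorem image_de_sources_subset [Finite V] (hD : IsDAG D) (hD' : IsDAG D')
    (h : UncondEquiv D D') : de D '' sources D ⊆ de D' '' sources D' := by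
  rintro _ ⟨m, hm, rfl⟩
  obtain ⟨m', hm', hm'm⟩ := hD'.exists_mem_sources_mem_an m
  have hmm' : m' ∈ de D m :=
    mem_de_of_hasTrek hm ((h.hasTrek_iff m m').mpr (hD'.hasTrek_of_mem_an hm'm .refl))
  exact ⟨m', hm',
    (de_subset_de_of_mem_de hD' h.symm hm hm'm).antisymm (de_subset_de_of_mem_de hD h hm' hmm')⟩

end

/-- Unconditionally equivalent DAGs on the same finite vertex
set have the same family `E^D = {de_D(m) : m a source node of D}`. -/
theorem ecc_eq_of_uncondEquiv [Fintype V] (D D' : Digraph V) (hD : IsDAG D)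
    (hD' : IsDAG D') (h : UncondEquiv D D') :
    de D '' sources D = de D' '' sources D' :=
  (image_de_sources_subset hD hD' h).antisymm (image_de_sources_subset hD' hD h.symm)

end UEC
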